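/- Let h be a dilation on R^n with ordered weights r_1 ≤ ... ≤ r_n satisfying ℓ := r_n - 2r_{n-1} ≥ 0, and let A = (a_i^j)_{i,j=1}^{n-1} be a nonzero symmetric real matrix with a_i^j = 0 unless r_i = r_j = r_{n-1}. Then the unique linear map D_ℓ^A of weight ℓ on 𝔪 = g_{<0}(h) that vanishes on constant vector fields, satisfies D_ℓ^A(x_i ∂_j) = δ_j^n Σ_k a_i^k ∂_k on linear vector fields, and obeys D_ℓ^A(fg ∂_j) = f D_ℓ^A(g ∂_j) + g D_ℓ^A(f ∂_j) for polynomials f, g, is a derivation of the Lie algebra 𝔪, i.e. D_ℓ^A([X,Y]) = [D_ℓ^A(X),Y] + [X,D_ℓ^A(Y)] for all X,Y ∈ 𝔪. -/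

import Mathlib

open MvPolynomial

/-- Polynomial vector fields on ℝⁿ, given by their coefficient polynomials. -/
abbrev VF (n : ℕ) := Fin n → MvPolynomial (Fin n) ℝ

/-- Lie bracket of polynomial vector fields. -/
noncomputable def bracket {n : ℕ} (V W : VF n) : VF n :=
  fun i => ∑ j, (V j * pderiv j (W i) - W j * pderiv j (V i))

/-- The weight (Euler) vector field ∇ʰ = Σᵢ rᵢ xⁱ ∂ᵢ of the dilation with weights r. -/
noncomputable def nabla {n : ℕ} (r : Fin n → ℕ) : VF n :=
  fun i => (r i : MvPolynomial (Fin n) ℝ) * X i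

/-- A polynomial vector field is homogeneous of weight `a` w.r.t. the dilation `r`. -/
def IsHomog {n : ℕ} (r : Fin n → ℕ) (a : ℤ) (V : VF n) : Prop :=
  bracket (nabla r) V = fun i => (a : ℝ) • V i

/-- The coordinate vector field ∂ᵢ. -/
noncomputable def coordVF {n : ℕ} (i : Fin n) : VF n := fun k => if k = i then 1 else 0

/-- The vector field f ∂ⱼ. -/
noncomputable def vfOf {n : ℕ} (f : MvPolynomial (Fin n) ℝ) (j : Fin n) : VF n :=
  fun k => if k = j then f else 0

/-- 𝔪 = g₋(h): the span of homogeneous polynomial vector fields of negative weight. -/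
noncomputable def negPart {n : ℕ} (r : Fin n → ℕ) : Submodule ℝ (VF n) :=
  Submodule.span ℝ {V : VF n | ∃ k : ℤ, k < 0 ∧ IsHomog r k V}

/-!
The axioms determine `D` completely: with `L` the last index,
`D V = matGrad a L V = Σₖ (Σᵢ aᵢₖ ∂ᵢ V_L) ∂ₖ`, the field `A ∇(V_L)`.
A homogeneous field of negative weight `w` has coefficients `Vⱼ` of weighted degree
`w + rⱼ < rⱼ`, so `Vⱼ` does not involve any `xᵢ` with `rᵢ ≥ rⱼ`. As `aᵢₖ ≠ 0` only for
indices `i` of maximal weight among the non-last ones, in `D[V,W] - [DV,W] - [V,DW]` every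
first-order term either vanishes or cancels against its mirror image by the symmetry of `A`,
and the second-order terms cancel because partial derivatives commute. Both sides are
bilinear, so the identity passes from homogeneous fields to their span.
-/

namespace MvPolynomial

variable {R σ : Type*}

theorem pderiv_pderiv_comm [CommRing R] (i j : σ) (f : MvPolynomial σ R) :
    pderiv i (pderiv j f) = pderiv j (pderiv i f) := by
  classical
  have hcomm : ⁅pderiv i, pderiv j⁆ = (0 : Derivation R (MvPolynomial σ R) (MvPolynomial σ R)) :=
    derivation_ext fun k => by
      rw [Derivation.commutator_apply, pderiv_X, pderiv_X]
      simp [Pi.single_apply, apply_ite (pderiv _)]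
  rw [← sub_eq_zero, ← Derivation.commutator_apply, hcomm, Derivation.zero_apply]

theorem coeff_X_mul_pderiv [CommSemiring R] (j : σ) (m : σ →₀ ℕ) (f : MvPolynomial σ R) :
    coeff m (X j * pderiv j f) = m j * coeff m f := by
  classical
  induction f using induction_on' with
  | monomial s c =>
    rw [X_mul_pderiv_monomial, coeff_smul, coeff_monomial]
    split_ifs with h <;> simp [h, nsmul_eq_mul]
  | add p q hp hq => simp [mul_add, hp, hq]

end MvPolynomial

section Homogeneous

variable {N : ℕ} {r : Fin N → ℕ} {w : ℤ} {V : VF N}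

theorem IsHomog.weight_eq_of_coeff_ne_zero (hV : IsHomog r w V) {j : Fin N} {m : Fin N →₀ ℕ}
    (hm : coeff m (V j) ≠ 0) : ∑ t, (r t : ℝ) * m t = w + r j := by
  have hcoeff := congrArg (coeff m) (congrFun hV j)
  have hterm : ∀ t, coeff m ((r t : MvPolynomial (Fin N) ℝ) * X t * pderiv t (V j)
      - V t * pderiv t ((r j : MvPolynomial (Fin N) ℝ) * X j))
      = (r t : ℝ) * m t * coeff m (V j) - if j = t then (r j : ℝ) * coeff m (V t) else 0 := by
    intro t
    rw [coeff_sub, ← C_eq_coe_nat, mul_assoc, coeff_C_mul, coeff_X_mul_pderiv,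
      ← C_eq_coe_nat, pderiv_C_mul, pderiv_X]
    split_ifs with h
    · subst h; rw [Pi.single_eq_same, mul_one, mul_comm (V j), coeff_C_mul]; ring
    · rw [Pi.single_eq_of_ne h, mul_zero, mul_zero, coeff_zero]; ring
  simp only [bracket, nabla] at hcoeff
  rw [coeff_sum, Finset.sum_congr rfl fun t _ => hterm t, Finset.sum_sub_distrib,
    Finset.sum_ite_eq, if_pos (Finset.mem_univ _), ← Finset.sum_mul, coeff_smul,
    smul_eq_mul] at hcoeff
  apply mul_right_cancel₀ hm
  linarith

theorem IsHomog.pderiv_eq_zero (hV : IsHomog r w V) (hw : w < 0) {i j : Fin N}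
    (hij : r j ≤ r i) : pderiv i (V j) = 0 := by
  refine pderiv_eq_zero_of_notMem_vars fun hi => ?_
  obtain ⟨m, hm, hmi⟩ := (mem_vars_iff_mem_support i).mp hi
  have hweight := hV.weight_eq_of_coeff_ne_zero (mem_support_iff.mp hm)
  have hmi' : (1 : ℝ) ≤ m i := by
    exact_mod_cast Nat.one_le_iff_ne_zero.mpr (Finsupp.mem_support_iff.mp hmi)
  have hri : (r i : ℝ) ≤ r i * m i := le_mul_of_one_le_right (Nat.cast_nonneg _) hmi'
  have hsum : (r i : ℝ) * m i ≤ ∑ t, (r t : ℝ) * m t :=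
    Finset.single_le_sum (f := fun t => (r t : ℝ) * m t) (fun _ _ => by positivity)
      (Finset.mem_univ i)
  have hw' : (w : ℝ) ≤ -1 := by exact_mod_cast Int.le_sub_one_of_lt hw
  have hrij : (r j : ℝ) ≤ r i := by exact_mod_cast hij
  linarith

end Homogeneous

theorem LinearMap.leibniz_of_mem_span {R M : Type*} [CommSemiring R] [AddCommMonoid M]
    [Module R M] (B : M →ₗ[R] M →ₗ[R] M) (f : M →ₗ[R] M) {s : Set M}
    (hs : ∀ x ∈ s, ∀ y ∈ s, f (B x y) = B (f x) y + B x (f y)) {x y : M}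
    (hx : x ∈ Submodule.span R s) (hy : y ∈ Submodule.span R s) :
    f (B x y) = B (f x) y + B x (f y) := by
  induction hx, hy using Submodule.span_induction₂ with
  | mem_mem x y hx hy => exact hs x hx y hy
  | zero_left => simp
  | zero_right => simp
  | add_left x₁ x₂ y _ _ _ h₁ h₂ => simp only [map_add, LinearMap.add_apply, h₁, h₂]; abel
  | add_right x y₁ y₂ _ _ _ h₁ h₂ => simp only [map_add, h₁, h₂]; abel
  | smul_left c x y _ _ h => simp only [map_smul, LinearMap.smul_apply, h, smul_add]
  | smul_right c x y _ _ h => simp only [map_smul, h, smul_add]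

section VectorFields

variable {N : ℕ}

noncomputable def bracketBilin : VF N →ₗ[ℝ] VF N →ₗ[ℝ] VF N :=
  LinearMap.mk₂ ℝ bracket
    (fun V V' W => funext fun i => by
      simp only [bracket, Pi.add_apply, map_add, ← Finset.sum_add_distrib]
      exact Finset.sum_congr rfl fun _ _ => by ring)
    (fun c V W => funext fun i => by
      simp only [bracket, Pi.smul_apply, smul_eq_C_mul, pderiv_C_mul, Finset.mul_sum]
      exact Finset.sum_congr rfl fun _ _ => by ring)
    (fun V W W' => funext fun i => by
      simp only [bracket, Pi.add_apply, map_add, ← Finset.sum_add_distrib]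
      exact Finset.sum_congr rfl fun _ _ => by ring)
    (fun c V W => funext fun i => by
      simp only [bracket, Pi.smul_apply, smul_eq_C_mul, pderiv_C_mul, Finset.mul_sum]
      exact Finset.sum_congr rfl fun _ _ => by ring)

noncomputable def matGrad (a : Fin N → Fin N → ℝ) (L : Fin N) : VF N →ₗ[ℝ] VF N where
  toFun V k := ∑ i, C (a i k) * pderiv i (V L)
  map_add' V W := funext fun k => by simp [mul_add, Finset.sum_add_distrib]
  map_smul' c V := funext fun k => by
    simp only [Pi.smul_apply, smul_eq_C_mul, pderiv_C_mul, Finset.mul_sum, RingHom.id_apply]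
    exact Finset.sum_congr rfl fun _ _ => by ring

theorem matGrad_apply (a : Fin N → Fin N → ℝ) (L : Fin N) (V : VF N) (k : Fin N) :
    matGrad a L V k = ∑ i, C (a i k) * pderiv i (V L) := rfl

end VectorFields

section Uniqueness

variable {N : ℕ} (a : Fin N → Fin N → ℝ) (L : Fin N)

theorem sum_vfOf (U : VF N) : ∑ j, vfOf (U j) j = U := by
  funext k
  simp [Finset.sum_apply, vfOf]

theorem vfOf_add (f g : MvPolynomial (Fin N) ℝ) (j : Fin N) :
    vfOf (f + g) j = vfOf f j + vfOf g j := by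
  funext k
  by_cases h : k = j <;> simp [vfOf, h]

theorem vfOf_C (c : ℝ) (j : Fin N) : vfOf (C c) j = c • coordVF j := by
  funext k
  by_cases h : k = j <;> simp [vfOf, coordVF, h, smul_eq_C_mul]

theorem matGrad_coordVF (i : Fin N) : matGrad a L (coordVF i) = 0 := by
  funext k
  simp [matGrad_apply, coordVF, apply_ite (pderiv _)]

theorem matGrad_vfOf_X (i j : Fin N) :
    matGrad a L (vfOf (X i) j) = if j = L then (fun k => C (a i k)) else 0 := by
  funext k
  by_cases h : j = L
  · subst h; simp [matGrad_apply, vfOf, pderiv_X, Pi.single_apply]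
  · simp [matGrad_apply, vfOf, Ne.symm h, h]

theorem matGrad_vfOf_mul (f g : MvPolynomial (Fin N) ℝ) (j : Fin N) :
    matGrad a L (vfOf (f * g) j)
      = fun k => f * matGrad a L (vfOf g j) k + g * matGrad a L (vfOf f j) k := by
  funext k
  by_cases h : L = j
  · simp only [matGrad_apply, vfOf, h, if_true, pderiv_mul, Finset.mul_sum,
      ← Finset.sum_add_distrib]
    exact Finset.sum_congr rfl fun _ _ => by ring
  · simp [matGrad_apply, vfOf, h]

theorem eq_matGrad {a : Fin N → Fin N → ℝ} {L : Fin N} {D : VF N → VF N}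
    (hadd : ∀ V W, D (V + W) = D V + D W)
    (hsmul : ∀ (c : ℝ) V, D (c • V) = c • D V)
    (hconst : ∀ i, D (coordVF i) = 0)
    (hlinval : ∀ i j : Fin N, D (vfOf (X i) j) = if j = L then (fun k => C (a i k)) else 0)
    (hmul : ∀ (f g : MvPolynomial (Fin N) ℝ) (j : Fin N),
      D (vfOf (f * g) j) = (fun k => f * D (vfOf g j) k + g * D (vfOf f j) k)) :
    D = matGrad a L := by
  have hvfOf (f : MvPolynomial (Fin N) ℝ) (j : Fin N) : D (vfOf f j) = matGrad a L (vfOf f j) := by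
    induction f using MvPolynomial.induction_on with
    | C c => rw [vfOf_C, hsmul, map_smul, hconst, matGrad_coordVF]
    | add p q hp hq => rw [vfOf_add, hadd, map_add, hp, hq]
    | mul_X p i hp => rw [hmul, matGrad_vfOf_mul, hlinval, matGrad_vfOf_X, hp]
  funext U
  rw [← sum_vfOf U, ← AddMonoidHom.mk'_apply D hadd, map_sum, map_sum]
  simp only [AddMonoidHom.mk'_apply, hvfOf]

end Uniqueness

section Derivation

variable {N : ℕ} {r : Fin N → ℕ} {a : Fin N → Fin N → ℝ} {L : Fin N} {v w : ℤ} {V W : VF N}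

theorem pderiv_bracket_apply_of_dominant (hV : IsHomog r v V) (hv : v < 0)
    (hW : IsHomog r w W) (hw : w < 0) {i : Fin N} (hi : ∀ k ≠ L, r k ≤ r i) :
    pderiv i (bracket V W L)
      = ∑ j, (V j * pderiv j (pderiv i (W L)) - W j * pderiv j (pderiv i (V L))) := by
  have hcross {V' W' : VF N} {v' w' : ℤ} (hV' : IsHomog r v' V') (hv' : v' < 0)
      (hW' : IsHomog r w' W') (hw' : w' < 0) (j : Fin N) :
      pderiv i (V' j) * pderiv j (W' L) = 0 := by
    by_cases hj : j = L
    · rw [hj, hW'.pderiv_eq_zero hw' le_rfl, mul_zero]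
    · rw [hV'.pderiv_eq_zero hv' (hi j hj), zero_mul]
  simp only [bracket, map_sum, map_sub, pderiv_mul, hcross hV hv hW hw, hcross hW hw hV hv,
    zero_add]
  exact Finset.sum_congr rfl fun j _ => by
    rw [pderiv_pderiv_comm i j (W L), pderiv_pderiv_comm i j (V L)]

theorem sum_matGrad_mul_pderiv_comm (hsymm : ∀ i j, a i j = a j i) (V W : VF N) :
    ∑ j, matGrad a L V j * pderiv j (W L) = ∑ j, matGrad a L W j * pderiv j (V L) := by
  simp only [matGrad_apply, Finset.sum_mul]
  rw [Finset.sum_comm]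
  exact Finset.sum_congr rfl fun j _ => Finset.sum_congr rfl fun i _ => by rw [hsymm]; ring

theorem sum_matGrad_mul_pderiv_eq_zero (hdom : ∀ i j, a i j ≠ 0 → ∀ k ≠ L, r k ≤ r j)
    (hW : IsHomog r w W) (hw : w < 0) {k : Fin N} (hk : k ≠ L) (U : VF N) :
    ∑ j, matGrad a L U j * pderiv j (W k) = 0 := by
  refine Finset.sum_eq_zero fun j _ => ?_
  rw [matGrad_apply, Finset.sum_mul]
  refine Finset.sum_eq_zero fun i _ => ?_
  by_cases ha : a i j = 0
  · simp [ha]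
  · rw [hW.pderiv_eq_zero hw (hdom i j ha k hk), mul_zero]

theorem matGrad_bracket (hsymm : ∀ i j, a i j = a j i)
    (hdom : ∀ i j, a i j ≠ 0 → ∀ k ≠ L, r k ≤ r i)
    (hV : IsHomog r v V) (hv : v < 0) (hW : IsHomog r w W) (hw : w < 0) :
    matGrad a L (bracket V W) = bracket (matGrad a L V) W + bracket V (matGrad a L W) := by
  funext k
  have hfirst : ∑ j, matGrad a L V j * pderiv j (W k) = ∑ j, matGrad a L W j * pderiv j (V k) := by
    by_cases hk : k = L
    · rw [hk, sum_matGrad_mul_pderiv_comm hsymm]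
    · have hdom' : ∀ i j, a i j ≠ 0 → ∀ k ≠ L, r k ≤ r j :=
        fun i j ha => hdom j i (by rwa [hsymm])
      rw [sum_matGrad_mul_pderiv_eq_zero hdom' hW hw hk,
        sum_matGrad_mul_pderiv_eq_zero hdom' hV hv hk]
  have hsecond : ∑ j, (V j * pderiv j (matGrad a L W k) - W j * pderiv j (matGrad a L V k))
      = matGrad a L (bracket V W) k := by
    simp only [matGrad_apply, map_sum, pderiv_C_mul, Finset.mul_sum, ← Finset.sum_sub_distrib]
    rw [Finset.sum_comm]
    refine Finset.sum_congr rfl fun i _ => ?_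
    by_cases ha : a i k = 0
    · simp [ha]
    · rw [pderiv_bracket_apply_of_dominant hV hv hW hw (hdom i k ha), Finset.mul_sum]
      exact Finset.sum_congr rfl fun j _ => by ring
  calc matGrad a L (bracket V W) k
      = (∑ j, matGrad a L V j * pderiv j (W k) - ∑ j, matGrad a L W j * pderiv j (V k))
        + ∑ j, (V j * pderiv j (matGrad a L W k) - W j * pderiv j (matGrad a L V k)) := by
        rw [hfirst, sub_self, zero_add, hsecond]
    _ = (bracket (matGrad a L V) W + bracket V (matGrad a L W)) k := by
        simp only [Pi.add_apply, bracket, ← Finset.sum_sub_distrib, ← Finset.sum_add_distrib]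
        exact Finset.sum_congr rfl fun j _ => by ring

end Derivation

/-- Let `ℓ = rₙ - 2rₙ₋₁ ≥ 0` and let `A = (aᵢʲ)` be a nonzero
symmetric matrix with `aᵢʲ = 0` unless `rᵢ = rⱼ = rₙ₋₁`. Then the unique linear
(weight-`ℓ`) map `D = D_ℓ^A` vanishing on constant vector fields, with
`D(xᵢ∂ⱼ) = δⱼⁿ Σₖ aᵢᵏ ∂ₖ` on linear vector fields, and satisfying the multiplicative
rule `D(fg∂ⱼ) = f·D(g∂ⱼ) + g·D(f∂ⱼ)`, is a derivation of `𝔪 = g₋(h)`. -/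
theorem DlA_is_derivation
    (n : ℕ) (r : Fin (n + 2) → ℕ) (hmono : Monotone r)
    (a : Fin (n + 2) → Fin (n + 2) → ℝ)
    (hsymm : ∀ i j, a i j = a j i)
    (hsupp : ∀ i j, a i j ≠ 0 →
      r i = r (⟨n, by omega⟩ : Fin (n + 2)) ∧ r j = r (⟨n, by omega⟩ : Fin (n + 2)) ∧
      i ≠ Fin.last (n + 1) ∧ j ≠ Fin.last (n + 1))
    (D : VF (n + 2) → VF (n + 2))
    (hadd : ∀ V W, D (V + W) = D V + D W)
    (hsmul : ∀ (c : ℝ) V, D (c • V) = c • D V)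
    (hconst : ∀ i, D (coordVF i) = 0)
    (hlinval : ∀ i j : Fin (n + 2),
      D (vfOf (X i) j) = if j = Fin.last (n + 1) then (fun k => C (a i k)) else 0)
    (hmul : ∀ (f g : MvPolynomial (Fin (n + 2)) ℝ) (j : Fin (n + 2)),
      D (vfOf (f * g) j) = (fun k => f * D (vfOf g j) k + g * D (vfOf f j) k))
    : ∀ V ∈ negPart r, ∀ W ∈ negPart r,
      D (bracket V W) = bracket (D V) W + bracket V (D W) := by
  intro V hV W hW
  have hdom : ∀ i j, a i j ≠ 0 → ∀ k ≠ Fin.last (n + 1), r k ≤ r i := by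
    intro i j ha k hk
    rw [(hsupp i j ha).1]
    have hk' : (k : ℕ) < n + 1 := Fin.val_lt_last hk
    exact hmono (Fin.le_def.mpr (Nat.lt_succ_iff.mp hk'))
  rw [eq_matGrad hadd hsmul hconst hlinval hmul]
  refine LinearMap.leibniz_of_mem_span bracketBilin (matGrad a _) ?_ hV hW
  rintro _ ⟨v, hv, hVv⟩ _ ⟨w, hw, hWw⟩
  exact matGrad_bracket hsymm hdom hVv hv hWw hw
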